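/- For n ≥ 2 and k ≥ 0, let W_k = S^k(ℂ^n) be the k-th symmetric power of the defining representation of sl_n(ℂ) and let w_k ∈ W_k be the k-th symmetric power of the basis vector u_n (the lowest weight vector: e_{ab} w_k = 0 for all a > b). The operators x_a := e_{n−a,n} (1 ≤ a ≤ n−1) acting on W_k commute, the module map ℂ[x_1,…,x_{n−1}] → W_k, P ↦ P·w_k, is surjective, and its kernel is the ideal generated by all monomials x_1^{ν_1}⋯x_{n−1}^{ν_{n−1}} of total degree k+1. Hence W_k ≅ V_k^{(n)} as ℂ[x_1,…,x_{n−1}]-modules, with w_k corresponding to the class of 1. -/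

import Mathlib

/-
The operator `x_a` acts on `S^k(ℂⁿ) = ℂ[X_0, …, X_{n-1}]_k` as `X_{e(a)} ∂/∂X_{n-1}` with
`e(a) ≠ n-1`, and the coefficient `X_{e(a)}` is a constant for `∂/∂X_{n-1}`. Hence the `x_a`
commute, and `x^s = X_e^s ∂^{|s|}`, so that
`x^s · u_n^k = k(k-1)⋯(k-|s|+1) X_e^s u_n^{k-|s|}`.
The falling factorial vanishes exactly when `|s| > k`, and for `|s| ≤ k` the monomials
`X_e^s u_n^{k-|s|}` are distinct and run over all monomials of degree `k`. So the image is
`S^k(ℂⁿ)` and the kernel is spanned by the monomials of degree `> k`, which is the monomial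
ideal generated in degree `k + 1`.
-/

open MvPolynomial

noncomputable section

/-- The operator `x_a = e_{n-a,n}` acting on `S^k(ℂⁿ)`, realized as polynomials in `n`
variables (with `u_j ↔ X_j`), by the derivation `x_{n-a} ∂/∂x_n`. -/
def symX (n : ℕ) (a : Fin (n - 1)) : Module.End ℂ (MvPolynomial (Fin n) ℂ) :=
  (LinearMap.mulLeft ℂ (X (⟨n - 2 - a.val, by have := a.isLt; omega⟩ : Fin n) :
      MvPolynomial (Fin n) ℂ)).comp
    (pderiv (⟨n - 1, by have := a.isLt; omega⟩ : Fin n)).toLinearMap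

/-- Evaluation of a polynomial `P ∈ ℂ[x_1,…,x_{n-1}]` at the commuting operators
`x_1, …, x_{n-1}`, giving the module action of `ℂ[x_1,…,x_{n-1}]` on `S^k(ℂⁿ)`. -/
def symAct (n : ℕ) (P : MvPolynomial (Fin (n - 1)) ℂ) :
    Module.End ℂ (MvPolynomial (Fin n) ℂ) :=
  ∑ ν ∈ P.support, P.coeff ν • (List.ofFn fun a : Fin (n - 1) => symX n a ^ ν a).prod

/-- The ideal of `ℂ[x_1,…,x_{n-1}]` generated by all monomials of total degree `k+1`
(this is `J_k^{(n)}`). -/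
def Jtop (n k : ℕ) : Ideal (MvPolynomial (Fin (n - 1)) ℂ) :=
  Ideal.span {u | ∃ ν : Fin (n - 1) → ℕ, (∑ a, ν a) = k + 1 ∧ u = ∏ a, X a ^ ν a}

namespace Derivation

variable {R A : Type*} [CommSemiring R] [CommSemiring A] [Algebra R A] (D : Derivation R A A)

theorem pow_apply_mul_of_apply_eq_zero {c : A} (hc : D c = 0) (m : ℕ) (g : A) :
    ((D : Module.End R A) ^ m) (c * g) = c * ((D : Module.End R A) ^ m) g := by
  induction m with
  | zero => rfl
  | succ m ih =>
    rw [pow_succ', Module.End.mul_apply, ih, Module.End.mul_apply]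
    change D (c * _) = c * D _
    rw [D.leibniz, hc, smul_zero, add_zero, smul_eq_mul]

theorem mulLeft_comp_pow_mul_mulLeft_comp_pow (c : A) {c' : A} (hc' : D c' = 0) (m m' : ℕ) :
    (LinearMap.mulLeft R c ∘ₗ (D : Module.End R A) ^ m) *
        (LinearMap.mulLeft R c' ∘ₗ (D : Module.End R A) ^ m') =
      LinearMap.mulLeft R (c * c') ∘ₗ (D : Module.End R A) ^ (m + m') := by
  ext g
  simp only [Module.End.mul_apply, LinearMap.comp_apply, LinearMap.mulLeft_apply,
    D.pow_apply_mul_of_apply_eq_zero hc', pow_add]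
  ring

theorem mulLeft_comp_pow_eq {c : A} (hc : D c = 0) (e : ℕ) :
    (LinearMap.mulLeft R c ∘ₗ (D : Module.End R A)) ^ e =
      LinearMap.mulLeft R (c ^ e) ∘ₗ (D : Module.End R A) ^ e := by
  induction e with
  | zero => ext; simp
  | succ e ih =>
    have := D.mulLeft_comp_pow_mul_mulLeft_comp_pow (c ^ e) hc e 1
    rw [pow_one] at this
    rw [pow_succ, ih, this, pow_succ c]

theorem commute_mulLeft_comp {c c' : A} (hc : D c = 0) (hc' : D c' = 0) :
    Commute (LinearMap.mulLeft R c ∘ₗ (D : Module.End R A))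
      (LinearMap.mulLeft R c' ∘ₗ (D : Module.End R A)) := by
  have h {c c' : A} (hc' : D c' = 0) := D.mulLeft_comp_pow_mul_mulLeft_comp_pow c hc' 1 1
  simp only [pow_one] at h
  rw [Commute, SemiconjBy, h hc', h hc, mul_comm c]

theorem ofFn_prod_mulLeft_comp_pow {m : ℕ} (c : Fin m → A) (hc : ∀ i, D (c i) = 0)
    (e : Fin m → ℕ) :
    (List.ofFn fun i => (LinearMap.mulLeft R (c i) ∘ₗ (D : Module.End R A)) ^ e i).prod =
      LinearMap.mulLeft R (∏ i, c i ^ e i) ∘ₗ (D : Module.End R A) ^ (∑ i, e i) := by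
  induction m with
  | zero => ext; simp
  | succ m ih =>
    have hlast : D (c (Fin.last m) ^ e (Fin.last m)) = 0 := by
      simp [Derivation.leibniz_pow, hc]
    rw [List.ofFn_succ', List.prod_concat, ih _ (fun i => hc i.castSucc),
      D.mulLeft_comp_pow_eq (hc _), D.mulLeft_comp_pow_mul_mulLeft_comp_pow _ hlast,
      Fin.prod_univ_castSucc, Fin.sum_univ_castSucc]

end Derivation

namespace MvPolynomial

variable {R σ : Type*} [CommSemiring R]

theorem pow_pderiv_apply_X_pow (i : σ) (k m : ℕ) :
    ((pderiv (R := R) i : Module.End R (MvPolynomial σ R)) ^ m) (X i ^ k) =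
      k.descFactorial m • X i ^ (k - m) := by
  induction m with
  | zero => simp
  | succ m ih =>
    rw [pow_succ', Module.End.mul_apply, ih]
    change pderiv i _ = _
    rw [map_nsmul, (pderiv i).leibniz_pow, pderiv_X_self, smul_eq_mul, mul_one, smul_smul,
      Nat.descFactorial_succ, mul_comm, Nat.sub_sub]

theorem prod_univ_X_pow_eq_monomial [Fintype σ] (s : σ →₀ ℕ) :
    ∏ i, X i ^ s i = monomial s (1 : R) := by
  rw [← prod_X_pow_eq_monomial]
  exact (Finset.prod_subset (Finset.subset_univ _)
    fun i _ hi => by rw [Finsupp.notMem_support_iff.mp hi, pow_zero]).symm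

theorem mem_ideal_span_monomial_degree_eq_iff (d : ℕ) (P : MvPolynomial σ R) :
    P ∈ Ideal.span ((fun s => monomial s (1 : R)) '' {s | s.degree = d}) ↔
      ∀ s ∈ P.support, d ≤ s.degree := by
  rw [mem_ideal_span_monomial_image]
  refine forall₂_congr fun s _ => ⟨?_, fun h => ?_⟩
  · rintro ⟨t, rfl, hts⟩
    exact Finsupp.degree_mono hts
  · obtain ⟨t, hts, ht⟩ := Finsupp.exists_le_degree_eq s d h
    exact ⟨t, ht, hts⟩

theorem prod_X_pow_comp_eq_monomial_mapDomain {τ : Type*} [Fintype σ] (f : σ → τ)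
    (s : σ →₀ ℕ) : ∏ i, X (f i) ^ s i = monomial (s.mapDomain f) (1 : R) := by
  simp_rw [← rename_X (R := R) f, ← map_pow, ← map_prod, prod_univ_X_pow_eq_monomial,
    rename_monomial]

end MvPolynomial

section SymmetricPower

variable {n : ℕ}

def xIdx (n : ℕ) (a : Fin (n - 1)) : Fin n := ⟨n - 2 - a.val, by have := a.isLt; omega⟩

def lastIdx (n : ℕ) (hn : 0 < n) : Fin n := ⟨n - 1, by omega⟩

theorem xIdx_injective : Function.Injective (xIdx n) := by
  intro a b h
  have := a.isLt; have := b.isLt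
  simp only [xIdx, Fin.mk.injEq] at h
  ext; omega

theorem xIdx_ne_lastIdx (hn : 0 < n) (a : Fin (n - 1)) : xIdx n a ≠ lastIdx n hn := by
  have := a.isLt
  simp only [xIdx, lastIdx, ne_eq, Fin.mk.injEq]
  omega

theorem exists_xIdx_eq (hn : 0 < n) {b : Fin n} (hb : b ≠ lastIdx n hn) :
    ∃ a, xIdx n a = b := by
  have := b.isLt
  have : b.val ≠ n - 1 := fun h => hb (Fin.ext h)
  exact ⟨⟨n - 2 - b.val, by omega⟩, Fin.ext (by simp only [xIdx]; omega)⟩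

theorem symX_eq (hn : 0 < n) (a : Fin (n - 1)) :
    symX n a = LinearMap.mulLeft ℂ (X (xIdx n a)) ∘ₗ
      (pderiv (R := ℂ) (lastIdx n hn) : Module.End ℂ (MvPolynomial (Fin n) ℂ)) :=
  rfl

theorem pderiv_lastIdx_X_xIdx (hn : 0 < n) (a : Fin (n - 1)) :
    pderiv (lastIdx n hn) (X (xIdx n a) : MvPolynomial (Fin n) ℂ) = 0 :=
  pderiv_X_of_ne (xIdx_ne_lastIdx hn a)

theorem symX_commute (a b : Fin (n - 1)) : symX n a * symX n b = symX n b * symX n a := by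
  have hn : 0 < n := by have := a.isLt; omega
  exact (pderiv _).commute_mulLeft_comp (pderiv_lastIdx_X_xIdx hn a)
    (pderiv_lastIdx_X_xIdx hn b)

theorem ofFn_prod_symX_pow (hn : 0 < n) (s : Fin (n - 1) → ℕ) :
    (List.ofFn fun a => symX n a ^ s a).prod =
      LinearMap.mulLeft ℂ (∏ a, X (xIdx n a) ^ s a) ∘ₗ
        (pderiv (R := ℂ) (lastIdx n hn) : Module.End ℂ (MvPolynomial (Fin n) ℂ)) ^
          (∑ a, s a) := by
  simp only [symX_eq hn]
  exact (pderiv _).ofFn_prod_mulLeft_comp_pow _ (pderiv_lastIdx_X_xIdx hn) s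

section CommutingOperators

open scoped IsMulCommutative

-- `aeval` needs a commutative target: evaluate in the subalgebra generated by the `symX n a`.
abbrev symXAlgebra (n : ℕ) : Subalgebra ℂ (Module.End ℂ (MvPolynomial (Fin n) ℂ)) :=
  Algebra.adjoin ℂ (Set.range (symX n))

instance (n : ℕ) : IsMulCommutative (symXAlgebra n) :=
  Algebra.isMulCommutative_adjoin ℂ (by rintro _ ⟨a, rfl⟩ _ ⟨b, rfl⟩; exact symX_commute a b)

def symXGen (n : ℕ) (a : Fin (n - 1)) : symXAlgebra n :=
  ⟨symX n a, Algebra.subset_adjoin ⟨a, rfl⟩⟩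

def symActHom (n : ℕ) :
    MvPolynomial (Fin (n - 1)) ℂ →ₐ[ℂ] Module.End ℂ (MvPolynomial (Fin n) ℂ) :=
  (symXAlgebra n).val.comp (aeval (symXGen n))

theorem symActHom_apply (P : MvPolynomial (Fin (n - 1)) ℂ) : symActHom n P = symAct n P := by
  rw [symActHom, AlgHom.comp_apply, aeval_def, eval₂_eq', map_sum]
  refine Finset.sum_congr rfl fun s _ => ?_
  rw [map_mul, AlgHom.commutes, ← Algebra.smul_def, ← List.prod_ofFn, map_list_prod,
    List.map_ofFn]
  rfl

theorem symAct_mul (P Q : MvPolynomial (Fin (n - 1)) ℂ) :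
    symAct n (P * Q) = symAct n P * symAct n Q := by
  simp only [← symActHom_apply, map_mul]

theorem symAct_one : symAct n 1 = 1 := by
  rw [← symActHom_apply, map_one]

end CommutingOperators

theorem symAct_monomial (s : Fin (n - 1) →₀ ℕ) (c : ℂ) :
    symAct n (monomial s c) = c • (List.ofFn fun a => symX n a ^ s a).prod := by
  classical
  rw [symAct, support_monomial]
  split_ifs with hc
  · simp [hc]
  · rw [Finset.sum_singleton, coeff_monomial, if_pos rfl]

-- `k - s.degree` truncates, but the terms with `k < s.degree` carry the factor
-- `k.descFactorial s.degree = 0`.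
def homogenizeExp (n : ℕ) (hn : 0 < n) (k : ℕ) (s : Fin (n - 1) →₀ ℕ) : Fin n →₀ ℕ :=
  s.mapDomain (xIdx n) + Finsupp.single (lastIdx n hn) (k - s.degree)

theorem homogenizeExp_apply_xIdx (hn : 0 < n) (k : ℕ) (s : Fin (n - 1) →₀ ℕ)
    (a : Fin (n - 1)) : homogenizeExp n hn k s (xIdx n a) = s a := by
  simp [homogenizeExp, Finsupp.mapDomain_apply xIdx_injective,
    Finsupp.single_eq_of_ne (xIdx_ne_lastIdx hn a)]

theorem homogenizeExp_injective (hn : 0 < n) (k : ℕ) :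
    Function.Injective (homogenizeExp n hn k) := fun s t h =>
  Finsupp.ext fun a => by rw [← homogenizeExp_apply_xIdx hn k, h, homogenizeExp_apply_xIdx]

theorem degree_homogenizeExp (hn : 0 < n) {k : ℕ} {s : Fin (n - 1) →₀ ℕ}
    (h : s.degree ≤ k) :
    (homogenizeExp n hn k s).degree = k := by
  rw [homogenizeExp, map_add, Finsupp.degree_mapDomain, Finsupp.degree_single]
  omega

theorem homogenizeExp_comapDomain (hn : 0 < n) {k : ℕ} {μ : Fin n →₀ ℕ}
    (hμ : μ.degree = k) :
    homogenizeExp n hn k (μ.comapDomain (xIdx n) xIdx_injective.injOn) = μ := by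
  have hsplit : (μ.comapDomain (xIdx n) xIdx_injective.injOn).mapDomain (xIdx n) +
      Finsupp.single (lastIdx n hn) (μ (lastIdx n hn)) = μ := by
    ext b
    rcases eq_or_ne b (lastIdx n hn) with rfl | hb
    · rw [Finsupp.add_apply, Finsupp.mapDomain_of_notMem_range, Finsupp.single_eq_same, zero_add]
      rintro ⟨a, ha⟩
      exact xIdx_ne_lastIdx hn a ha
    · obtain ⟨a, rfl⟩ := exists_xIdx_eq hn hb
      rw [Finsupp.add_apply, Finsupp.mapDomain_apply xIdx_injective, Finsupp.comapDomain_apply,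
        Finsupp.single_eq_of_ne hb, add_zero]
  have hdeg := congrArg Finsupp.degree hsplit
  rw [map_add, Finsupp.degree_mapDomain, Finsupp.degree_single] at hdeg
  rw [homogenizeExp]
  convert hsplit using 3
  omega

def orbitMap (n : ℕ) (hn : 0 < n) (k : ℕ) :
    MvPolynomial (Fin (n - 1)) ℂ →ₗ[ℂ] MvPolynomial (Fin n) ℂ :=
  LinearMap.applyₗ (X (lastIdx n hn) ^ k) ∘ₗ (symActHom n).toLinearMap

theorem orbitMap_apply (hn : 0 < n) (k : ℕ) (P : MvPolynomial (Fin (n - 1)) ℂ) :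
    orbitMap n hn k P = symAct n P (X (lastIdx n hn) ^ k) := by
  simp [orbitMap, symActHom_apply]

theorem orbitMap_monomial (hn : 0 < n) (k : ℕ) (s : Fin (n - 1) →₀ ℕ) (c : ℂ) :
    orbitMap n hn k (monomial s c) =
      monomial (homogenizeExp n hn k s) (k.descFactorial s.degree • c) := by
  rw [orbitMap_apply, symAct_monomial, ofFn_prod_symX_pow hn, LinearMap.smul_apply,
    LinearMap.comp_apply, ← Finsupp.degree_eq_sum, pow_pderiv_apply_X_pow,
    LinearMap.mulLeft_apply, prod_X_pow_comp_eq_monomial_mapDomain, X_pow_eq_monomial,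
    smul_monomial, monomial_mul, smul_monomial, one_mul, smul_eq_mul, homogenizeExp,
    nsmul_eq_mul, nsmul_eq_mul, mul_one, mul_comm]

theorem coeff_homogenizeExp_orbitMap (hn : 0 < n) (k : ℕ) (P : MvPolynomial (Fin (n - 1)) ℂ)
    (s : Fin (n - 1) →₀ ℕ) :
    coeff (homogenizeExp n hn k s) (orbitMap n hn k P) =
      k.descFactorial s.degree • P.coeff s := by
  classical
  conv_lhs => rw [P.as_sum, map_sum]
  rw [coeff_sum, Finset.sum_eq_single s]
  · rw [orbitMap_monomial, coeff_monomial, if_pos rfl]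
  · intro t _ hts
    rw [orbitMap_monomial, coeff_monomial, if_neg ((homogenizeExp_injective hn k).ne hts)]
  · intro hs
    simp [notMem_support_iff.mp hs]

theorem orbitMap_eq_zero_iff (hn : 0 < n) (k : ℕ) (P : MvPolynomial (Fin (n - 1)) ℂ) :
    orbitMap n hn k P = 0 ↔ ∀ s ∈ P.support, k < s.degree := by
  constructor
  · intro h s hs
    have hcoeff := coeff_homogenizeExp_orbitMap hn k P s
    rw [h, coeff_zero, eq_comm, smul_eq_zero, Nat.descFactorial_eq_zero_iff_lt] at hcoeff
    exact hcoeff.resolve_right (mem_support_iff.mp hs)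
  · intro h
    rw [P.as_sum, map_sum]
    refine Finset.sum_eq_zero fun s hs => ?_
    rw [orbitMap_monomial, Nat.descFactorial_eq_zero_iff_lt.mpr (h s hs), zero_smul,
      monomial_zero]

theorem Jtop_eq_span (n k : ℕ) :
    Jtop n k = Ideal.span ((fun s => monomial s (1 : ℂ)) '' {s | s.degree = k + 1}) := by
  rw [Jtop]
  congr 1
  ext u
  constructor
  · rintro ⟨ν, hν, rfl⟩
    refine ⟨Finsupp.equivFunOnFinite.symm ν, ?_, (prod_univ_X_pow_eq_monomial _).symm⟩
    rw [Set.mem_ofPred_eq, Finsupp.degree_eq_sum]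
    exact hν
  · rintro ⟨s, hs, rfl⟩
    rw [Set.mem_ofPred_eq, Finsupp.degree_eq_sum] at hs
    exact ⟨s, hs, (prod_univ_X_pow_eq_monomial s).symm⟩

theorem mem_Jtop_iff (k : ℕ) (P : MvPolynomial (Fin (n - 1)) ℂ) :
    P ∈ Jtop n k ↔ ∀ s ∈ P.support, k < s.degree := by
  rw [Jtop_eq_span, mem_ideal_span_monomial_degree_eq_iff]
  rfl

theorem ker_orbitMap (hn : 0 < n) (k : ℕ) :
    LinearMap.ker (orbitMap n hn k) = (Jtop n k).restrictScalars ℂ := by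
  ext P
  rw [LinearMap.mem_ker, orbitMap_eq_zero_iff, Submodule.restrictScalars_mem, mem_Jtop_iff]

theorem orbitMap_mem_homogeneousSubmodule (hn : 0 < n) (k : ℕ)
    (P : MvPolynomial (Fin (n - 1)) ℂ) :
    orbitMap n hn k P ∈ homogeneousSubmodule (Fin n) ℂ k := by
  rw [P.as_sum, map_sum]
  refine Submodule.sum_mem _ fun s _ => ?_
  rw [orbitMap_monomial]
  rcases le_or_gt s.degree k with h | h
  · exact isHomogeneous_monomial _ (degree_homogenizeExp hn h)
  · rw [Nat.descFactorial_eq_zero_iff_lt.mpr h, zero_smul, monomial_zero]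
    exact Submodule.zero_mem _

theorem monomial_mem_range_orbitMap (hn : 0 < n) {k : ℕ} {μ : Fin n →₀ ℕ} (hμ : μ.degree = k)
    (c : ℂ) : monomial μ c ∈ LinearMap.range (orbitMap n hn k) := by
  set s := μ.comapDomain (xIdx n) xIdx_injective.injOn
  have hs : s.degree ≤ k := hμ ▸ Finsupp.degree_comapDomain_le_of_canonicallyOrderedAdd _
  have hD : (k.descFactorial s.degree : ℂ) ≠ 0 :=
    Nat.cast_ne_zero.mpr fun h => (Nat.descFactorial_eq_zero_iff_lt.mp h).not_ge hs
  refine ⟨monomial s (c / k.descFactorial s.degree), ?_⟩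
  rw [orbitMap_monomial, homogenizeExp_comapDomain hn hμ, nsmul_eq_mul, mul_div_cancel₀ _ hD]

theorem range_orbitMap (hn : 0 < n) (k : ℕ) :
    LinearMap.range (orbitMap n hn k) = homogeneousSubmodule (Fin n) ℂ k := by
  refine le_antisymm ?_ fun f hf => ?_
  · rintro _ ⟨P, rfl⟩
    exact orbitMap_mem_homogeneousSubmodule hn k P
  · rw [f.as_sum]
    refine Submodule.sum_mem _ fun μ hμ => monomial_mem_range_orbitMap hn ?_ _
    rw [Finsupp.degree_eq_weight_one]
    exact hf (mem_support_iff.mp hμ)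

def quotientJtopEquiv (n : ℕ) (hn : 0 < n) (k : ℕ) :
    (MvPolynomial (Fin (n - 1)) ℂ ⧸ Jtop n k) ≃ₗ[ℂ] homogeneousSubmodule (Fin n) ℂ k :=
  (Submodule.Quotient.restrictScalarsEquiv ℂ (Jtop n k)).symm ≪≫ₗ
    Submodule.quotEquivOfEq _ _ (by rw [LinearMap.ker_codRestrict, ker_orbitMap]) ≪≫ₗ
    LinearMap.quotKerEquivOfSurjective
      ((orbitMap n hn k).codRestrict _ (orbitMap_mem_homogeneousSubmodule hn k))
      (by
        rintro ⟨f, hf⟩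
        obtain ⟨P, hP⟩ := (range_orbitMap hn k).ge hf
        exact ⟨P, Subtype.ext hP⟩)

theorem quotientJtopEquiv_mk (hn : 0 < n) (k : ℕ) (P : MvPolynomial (Fin (n - 1)) ℂ) :
    (quotientJtopEquiv n hn k (Ideal.Quotient.mk _ P) : MvPolynomial (Fin n) ℂ) =
      orbitMap n hn k P :=
  rfl

end SymmetricPower

theorem stmt1 (n k : ℕ) (hn : 2 ≤ n) :
    -- the operators commute
    (∀ a b : Fin (n - 1), symX n a * symX n b = symX n b * symX n a) ∧
    -- P ↦ symAct n P is multiplicative and unital (so P ↦ P · w_k is a module map)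
    (∀ P Q : MvPolynomial (Fin (n - 1)) ℂ, symAct n (P * Q) = symAct n P * symAct n Q) ∧
    symAct n 1 = 1 ∧
    -- surjectivity onto W_k = S^k(ℂⁿ) (homogeneous polynomials of degree k)
    (Set.range (fun P : MvPolynomial (Fin (n - 1)) ℂ =>
        symAct n P ((X (⟨n - 1, by omega⟩ : Fin n) : MvPolynomial (Fin n) ℂ) ^ k)) =
      (homogeneousSubmodule (Fin n) ℂ k : Set (MvPolynomial (Fin n) ℂ))) ∧
    -- the kernel is the ideal generated by the monomials of degree k+1
    ({P : MvPolynomial (Fin (n - 1)) ℂ |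
        symAct n P ((X (⟨n - 1, by omega⟩ : Fin n) : MvPolynomial (Fin n) ℂ) ^ k) = 0} =
      (Jtop n k : Set (MvPolynomial (Fin (n - 1)) ℂ))) ∧
    -- hence W_k ≅ V_k^{(n)}, with w_k corresponding to the class of 1
    ∃ e : (MvPolynomial (Fin (n - 1)) ℂ ⧸ Jtop n k) ≃ₗ[ℂ]
        homogeneousSubmodule (Fin n) ℂ k,
      ∀ P : MvPolynomial (Fin (n - 1)) ℂ,
        (e (Ideal.Quotient.mk (Jtop n k) P) : MvPolynomial (Fin n) ℂ) =
          symAct n P ((X (⟨n - 1, by omega⟩ : Fin n) : MvPolynomial (Fin n) ℂ) ^ k) := by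
  have hn0 : 0 < n := by omega
  have horbit : ⇑(orbitMap n hn0 k) = fun P => symAct n P (X ⟨n - 1, by omega⟩ ^ k) :=
    funext (orbitMap_apply hn0 k)
  refine ⟨symX_commute, symAct_mul, symAct_one, ?_, ?_, quotientJtopEquiv n hn0 k,
    fun P => (quotientJtopEquiv_mk hn0 k P).trans (orbitMap_apply hn0 k P)⟩
  · rw [← horbit, ← LinearMap.coe_range, range_orbitMap]
  · ext P
    rw [SetLike.mem_coe, mem_Jtop_iff, ← orbitMap_eq_zero_iff hn0, horbit]
    rfl

end
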